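/- arXiv:1604.05654 — 3 statements merged into one kernel-verified Lean document; each statement's English description precedes it below -/
import Mathlib

section
/- For every positive integer m, the sum over q from 1 to m-1 of C(m,q)·C(m-1,q+2)/C(2m,2q) (as rational numbers) equals (1/6)·m^2 - (13/6)·m - 3 + (5/2)·4^m·(m!)^2/(2m)!. -/
/-!
Write `P m q = C(2q, q) C(2(m - q), m - q)` (`centralBinomPair`). Each term of the sum equals
`P m q (m - q)(m - q - 1)(m - q - 2) / ((q + 1)(q + 2) m C(2m, m))`, and a partial fraction
decomposition in `q` reduces the sum to the convolutions `∑ P m q = 4 ^ m`,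
`∑ q P m q = m 4 ^ m / 2` (by the symmetry `q ↦ m - q`) and
`∑ P m q / (q + k) = C(2(m + k), m + k) / (k C(2k, k))`. The first and third follow by induction
on `m` from a single Wilf–Zeilberger certificate, which turns the recurrence in `m` into a
telescoping sum in `q`.
-/

open Finset Nat

lemma sum_range_succ_eq_add_sum_Icc_add {M : Type*} [AddCommMonoid M] (f : ℕ → M) {m : ℕ}
    (hm : 0 < m) : ∑ q ∈ range (m + 1), f q = f 0 + ∑ q ∈ Icc 1 (m - 1), f q + f m := by
  rw [range_eq_Ico, sum_Ico_succ_top (Nat.zero_le m), sum_eq_sum_Ico_succ_bot hm,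
    ← Ico_add_one_right_eq_Icc, Nat.sub_add_cancel (Nat.one_le_of_lt hm), zero_add]

lemma cast_succ_mul_centralBinom_succ (n : ℕ) :
    ((n : ℚ) + 1) * centralBinom (n + 1) = 2 * (2 * n + 1) * centralBinom n := by
  exact_mod_cast succ_mul_centralBinom_succ n

lemma choose_sq_mul_centralBinom {m q : ℕ} (h : q ≤ m) :
    m.choose q ^ 2 * centralBinom m
      = centralBinom q * centralBinom (m - q) * (2 * m).choose (2 * q) := by
  rw [← Nat.cast_inj (R := ℚ)]
  push_cast [centralBinom, Nat.cast_choose ℚ h, Nat.cast_choose ℚ (by omega : 2 * q ≤ 2 * m),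
    Nat.cast_choose ℚ (Nat.le_mul_of_pos_left q two_pos),
    Nat.cast_choose ℚ (Nat.le_mul_of_pos_left m two_pos),
    Nat.cast_choose ℚ (Nat.le_mul_of_pos_left (m - q) two_pos)]
  rw [show 2 * m - 2 * q = 2 * (m - q) by omega]
  simp only [two_mul, Nat.add_sub_cancel]
  field_simp

lemma choose_pred_add_two_mul (m q : ℕ) :
    ((m - 1).choose (q + 2) : ℚ) * ((q + 1) * (q + 2) * m)
      = m.choose q * ((m - q) * (m - q - 1) * (m - q - 2)) := by
  rcases le_or_gt (q + 3) m with h | h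
  · obtain ⟨b, rfl⟩ : ∃ b, m = q + (b + 3) := ⟨m - 3 - q, by omega⟩
    rw [show q + (b + 3) - 1 = q + 2 + b by omega, Nat.cast_add_choose, Nat.cast_add_choose,
      show q + (b + 3) = q + 2 + b + 1 by omega]
    simp only [Nat.factorial_succ]
    push_cast
    field_simp
    ring
  · rw [Nat.choose_eq_zero_of_lt (by omega : m - 1 < q + 2), Nat.cast_zero, zero_mul]
    rcases le_or_gt q m with hq | hq
    · obtain ⟨j, hj, rfl⟩ : ∃ j < 3, m = q + j := ⟨m - q, by omega, by omega⟩
      interval_cases j <;> push_cast <;> ring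
    · rw [Nat.choose_eq_zero_of_lt hq, Nat.cast_zero, zero_mul]

def centralBinomPair (m q : ℕ) : ℚ := centralBinom q * centralBinom (m - q)

lemma centralBinomPair_zero_right (m : ℕ) : centralBinomPair m 0 = centralBinom m := by
  simp [centralBinomPair]

lemma centralBinomPair_self (m : ℕ) : centralBinomPair m m = centralBinom m := by
  simp [centralBinomPair]

lemma centralBinomPair_symm {m q : ℕ} (h : q ≤ m) :
    centralBinomPair m (m - q) = centralBinomPair m q := by
  rw [centralBinomPair, centralBinomPair, Nat.sub_sub_self h, mul_comm]

lemma succ_mul_centralBinomPair_succ_succ (m q : ℕ) :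
    ((q : ℚ) + 1) * centralBinomPair (m + 1) (q + 1)
      = 2 * (2 * q + 1) * centralBinomPair m q := by
  rw [centralBinomPair, centralBinomPair, Nat.add_sub_add_right, ← mul_assoc,
    cast_succ_mul_centralBinom_succ, mul_assoc]

lemma sub_add_one_mul_centralBinomPair_succ {m q : ℕ} (h : q ≤ m) :
    ((m : ℚ) - q + 1) * centralBinomPair (m + 1) q
      = 2 * (2 * ((m : ℚ) - q) + 1) * centralBinomPair m q := by
  rw [centralBinomPair, centralBinomPair, Nat.sub_add_comm h, ← Nat.cast_sub h]
  linear_combination (centralBinom q : ℚ) * cast_succ_mul_centralBinom_succ (m - q)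

/-- The certificate found by Zeilberger's algorithm for `∑_q centralBinomPair m q`. -/
def wzCertificate (m q : ℕ) : ℚ := q * centralBinomPair (m + 1) q / (m + 1)

lemma centralBinomPair_succ_eq {m q : ℕ} (h : q ≤ m) :
    centralBinomPair (m + 1) q
      = 4 * centralBinomPair m q + (wzCertificate m q - wzCertificate m (q + 1)) := by
  have h1 := succ_mul_centralBinomPair_succ_succ m q
  have h2 := sub_add_one_mul_centralBinomPair_succ h
  simp only [wzCertificate]
  push_cast
  field_simp
  linear_combination h2 + h1

lemma add_mul_centralBinomPair_succ_div_eq {m q : ℕ} (h : q ≤ m) {k : ℚ}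
    (hk : (q : ℚ) + k ≠ 0) :
    ((m : ℚ) + 1 + k) * (centralBinomPair (m + 1) q / (q + k))
      = 2 * (2 * m + 1 + 2 * k) * (centralBinomPair m q / (q + k))
        + (wzCertificate m q - wzCertificate m (q + 1)) := by
  have h1 := succ_mul_centralBinomPair_succ_succ m q
  have h2 := sub_add_one_mul_centralBinomPair_succ h
  simp only [wzCertificate]
  push_cast
  field_simp
  linear_combination ((m : ℚ) + 1 + q + k) * h2 + ((q : ℚ) + k) * h1

lemma sum_range_wzCertificate_sub (m : ℕ) :
    ∑ q ∈ range (m + 1), (wzCertificate m q - wzCertificate m (q + 1))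
      = -(centralBinom (m + 1) : ℚ) := by
  rw [sum_range_sub', wzCertificate, wzCertificate, centralBinomPair_self]
  push_cast
  field_simp
  ring

theorem sum_centralBinomPair (m : ℕ) : ∑ q ∈ range (m + 1), centralBinomPair m q = 4 ^ m := by
  induction m with
  | zero => simp [centralBinomPair_self]
  | succ m ih =>
    rw [sum_range_succ, centralBinomPair_self,
      sum_congr rfl fun q hq => centralBinomPair_succ_eq (mem_range_succ_iff.mp hq),
      sum_add_distrib, ← mul_sum, ih, sum_range_wzCertificate_sub]
    ring

theorem sum_mul_centralBinomPair (m : ℕ) :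
    ∑ q ∈ range (m + 1), (q : ℚ) * centralBinomPair m q = m * 4 ^ m / 2 := by
  have hreflect : ∑ q ∈ range (m + 1), ((m : ℚ) - q) * centralBinomPair m q
      = ∑ q ∈ range (m + 1), (q : ℚ) * centralBinomPair m q := by
    rw [← sum_range_reflect]
    refine sum_congr rfl fun q hq => ?_
    have hq : q ≤ m := mem_range_succ_iff.mp hq
    rw [add_tsub_cancel_right, Nat.cast_sub hq, centralBinomPair_symm hq]
    ring
  have htotal : ∑ q ∈ range (m + 1), ((m : ℚ) - q) * centralBinomPair m q
      + ∑ q ∈ range (m + 1), (q : ℚ) * centralBinomPair m q = m * 4 ^ m := by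
    rw [← sum_add_distrib, ← sum_centralBinomPair, mul_sum]
    exact sum_congr rfl fun q _ => by ring
  linarith

theorem sum_centralBinomPair_div {k : ℕ} (hk : 0 < k) (m : ℕ) :
    ∑ q ∈ range (m + 1), centralBinomPair m q / (q + k)
      = centralBinom (m + k) / (k * centralBinom k) := by
  have hk' : (0 : ℚ) < k := by exact_mod_cast hk
  have hck : (centralBinom k : ℚ) ≠ 0 := by exact_mod_cast centralBinom_ne_zero k
  induction m with
  | zero =>
    simp only [zero_add, range_one, sum_singleton, centralBinomPair_self, centralBinom_zero,
      Nat.cast_zero, Nat.cast_one]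
    field_simp
  | succ m ih =>
    have hrec : ((m : ℚ) + 1 + k) * ∑ q ∈ range (m + 2), centralBinomPair (m + 1) q / (q + k)
        = 2 * (2 * m + 1 + 2 * k) * ∑ q ∈ range (m + 1), centralBinomPair m q / (q + k) := by
      rw [sum_range_succ, mul_add, mul_sum, mul_sum,
        sum_congr rfl fun q hq => add_mul_centralBinomPair_succ_div_eq
          (mem_range_succ_iff.mp hq) (by positivity),
        sum_add_distrib, sum_range_wzCertificate_sub, centralBinomPair_self]
      push_cast
      field_simp
      ring
    refine mul_left_cancel₀ (by positivity : (m : ℚ) + 1 + k ≠ 0) ?_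
    rw [hrec, ih, show m + 1 + k = m + k + 1 by ring]
    have hcb := cast_succ_mul_centralBinom_succ (m + k)
    push_cast at hcb ⊢
    field_simp
    linear_combination -hcb

lemma choose_mul_choose_div_choose_eq {m q : ℕ} (hm : 0 < m) (hq : q ≤ m) :
    (m.choose q * (m - 1).choose (q + 2) : ℚ) / (2 * m).choose (2 * q)
      = centralBinomPair m q * ((m - q) * (m - q - 1) * (m - q - 2) / ((q + 1) * (q + 2)))
        / (m * centralBinom m) := by
  have hsq : (m.choose q : ℚ) ^ 2 * centralBinom m
      = centralBinomPair m q * (2 * m).choose (2 * q) := by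
    rw [centralBinomPair]
    exact_mod_cast choose_sq_mul_centralBinom hq
  have hm' : (m : ℚ) ≠ 0 := by positivity
  have hc : (centralBinom m : ℚ) ≠ 0 := by exact_mod_cast centralBinom_ne_zero m
  have hc2 : ((2 * m).choose (2 * q) : ℚ) ≠ 0 := by
    exact_mod_cast (Nat.choose_pos (by omega)).ne'
  rw [div_eq_div_iff hc2 (by positivity)]
  field_simp
  linear_combination (m.choose q : ℚ) * centralBinom m * choose_pred_add_two_mul m q
    + ((m : ℚ) - q) * (m - q - 1) * (m - q - 2) * hsq

theorem sum_centralBinomPair_mul_ratio (m : ℕ) :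
    ∑ q ∈ range (m + 1),
        centralBinomPair m q * ((m - q) * (m - q - 1) * (m - q - 2) / ((q + 1) * (q + 2)))
      = 5 / 2 * m * 4 ^ m + m * (2 * m + 1) * (m - 6) / 3 * centralBinom m := by
  have hpartial : ∀ q : ℕ,
      centralBinomPair m q * ((m - q) * (m - q - 1) * (m - q - 2) / ((q + 1) * (q + 2)))
        = 3 * m * centralBinomPair m q - q * centralBinomPair m q
          + m * (m + 1) * (m - 1) * (centralBinomPair m q / (q + 1))
          - m * (m + 1) * (m + 2) * (centralBinomPair m q / (q + 2)) := fun q => by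
    field_simp
    ring
  have hdiv1 := sum_centralBinomPair_div one_pos m
  have hdiv2 := sum_centralBinomPair_div two_pos m
  have hcb1 := cast_succ_mul_centralBinom_succ m
  have hcb2 := cast_succ_mul_centralBinom_succ (m + 1)
  simp only [Nat.cast_one, Nat.cast_ofNat] at hdiv1 hdiv2
  rw [sum_congr rfl fun q _ => hpartial q]
  simp only [sum_add_distrib, sum_sub_distrib, ← mul_sum]
  rw [sum_centralBinomPair, sum_mul_centralBinomPair, hdiv1, hdiv2,
    show centralBinom 1 = 2 from rfl, show centralBinom 2 = 6 from rfl]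
  push_cast at hcb2 ⊢
  linear_combination ((m : ℚ) * (m - 1) / 2 - m * (2 * m + 3) / 6) * hcb1
    - (m : ℚ) * (m + 1) / 12 * hcb2

theorem sum_q_add_two_identity (m : ℕ) (hm : 1 ≤ m) :
    ∑ q ∈ Finset.Icc 1 (m - 1),
      ((m.choose q : ℚ) * ((m - 1).choose (q + 2) : ℚ)) / ((2 * m).choose (2 * q) : ℚ)
    = (1 / 6) * (m : ℚ) ^ 2 - (13 / 6) * (m : ℚ) - 3
      + (5 / 2) * 4 ^ m * (m.factorial : ℚ) ^ 2 / ((2 * m).factorial : ℚ) := by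
  set R : ℕ → ℚ := fun q =>
    centralBinomPair m q * ((m - q) * (m - q - 1) * (m - q - 2) / ((q + 1) * (q + 2)))
  have hterms : ∑ q ∈ Icc 1 (m - 1),
      ((m.choose q : ℚ) * ((m - 1).choose (q + 2) : ℚ)) / ((2 * m).choose (2 * q) : ℚ)
        = (∑ q ∈ Icc 1 (m - 1), R q) / (m * centralBinom m) := by
    rw [sum_div]
    exact sum_congr rfl fun q hq => choose_mul_choose_div_choose_eq hm (by grind)
  have hsplit := sum_range_succ_eq_add_sum_Icc_add R hm
  have hR0 : R 0 = m * (m - 1) * (m - 2) / 2 * centralBinom m := by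
    simp only [R, centralBinomPair_zero_right]
    ring
  have hRm : R m = 0 := by simp [R]
  rw [sum_centralBinomPair_mul_ratio, hR0, hRm] at hsplit
  have hfact : ((2 * m).factorial : ℚ) = centralBinom m * m.factorial ^ 2 := by
    rw [centralBinom, Nat.cast_choose ℚ (by omega), two_mul, Nat.add_sub_cancel]
    field_simp
  have hm' : (m : ℚ) ≠ 0 := by positivity
  have hc : (centralBinom m : ℚ) ≠ 0 := by exact_mod_cast centralBinom_ne_zero m
  rw [hterms, hfact]
  field_simp
  linear_combination -12 * hsplit
end

section
/- For every natural number m, the sum over q from 0 to m of C(2q,q)·C(2m-2q,m-q)/(q+1) (as rational numbers) equals C(2m+1, m+1). -/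
/-!
Writing `c n` for the central binomial coefficient, the summand `c q * c (m - q) / (q + 1)` is the
difference `F q - F (q + 1)` of the hypergeometric term `F q = c q * c (m - q) * (2 (m - q) + 1) / (m + 1)`
(a Wilf–Zeilberger certificate), so the sum telescopes to `F 0 = c m * (2 m + 1) / (m + 1)`,
which is `(2m+1).choose (m+1)`.
-/

open Finset Nat

section Telescoping

variable {K : Type*} [Field K] [CharZero K]

lemma cast_centralBinom_succ (n : ℕ) :
    ((n : K) + 1) * (centralBinom (n + 1) : K) = 2 * (2 * n + 1) * centralBinom n := by
  exact_mod_cast succ_mul_centralBinom_succ n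

lemma centralBinom_mul_centralBinom_telescope (i j : ℕ) :
    (centralBinom i * centralBinom (j + 1) * (2 * (j + 1 : ℕ) + 1) : K)
      - centralBinom (i + 1) * centralBinom j * (2 * j + 1)
    = ((i + j + 1 : ℕ) + 1) * (centralBinom i * centralBinom (j + 1) / (i + 1)) := by
  have hi : (i : K) + 1 ≠ 0 := Nat.cast_add_one_ne_zero i
  have hci := cast_centralBinom_succ (K := K) i
  have hcj := cast_centralBinom_succ (K := K) j
  field_simp
  push_cast
  linear_combination (2 * (i : K) + 1) * centralBinom i * hcj - (2 * (j : K) + 1) * centralBinom j * hci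

noncomputable def telescopeTerm (K : Type*) [Field K] (m q : ℕ) : K :=
  centralBinom q * centralBinom (m - q) * (2 * (m - q : ℕ) + 1) / (m + 1)

lemma telescopeTerm_sub_succ {m q : ℕ} (hq : q < m) :
    telescopeTerm K m q - telescopeTerm K m (q + 1)
      = centralBinom q * centralBinom (m - q) / ((q : K) + 1) := by
  obtain ⟨j, rfl⟩ : ∃ j, m = q + j + 1 := ⟨m - q - 1, by omega⟩
  have hm : ((q + j + 1 : ℕ) : K) + 1 ≠ 0 := Nat.cast_add_one_ne_zero _
  rw [telescopeTerm, telescopeTerm, ← sub_div, div_eq_iff hm,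
    show q + j + 1 - q = j + 1 by omega, show q + j + 1 - (q + 1) = j by omega,
    centralBinom_mul_centralBinom_telescope]
  ring

lemma telescopeTerm_zero (m : ℕ) : telescopeTerm K m 0 = ((2 * m + 1).choose (m + 1) : K) := by
  have hm : (m : K) + 1 ≠ 0 := Nat.cast_add_one_ne_zero m
  have hc : ((2 * m : ℕ) + 1 : K) * centralBinom m = (2 * m + 1).choose (m + 1) * ((m : K) + 1) := by
    exact_mod_cast add_one_mul_choose_eq (2 * m) m
  rw [telescopeTerm, div_eq_iff hm, Nat.sub_zero, centralBinom_zero, cast_one, one_mul]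
  push_cast at hc ⊢
  linear_combination hc

lemma telescopeTerm_self (m : ℕ) :
    telescopeTerm K m m = centralBinom m * centralBinom (m - m) / ((m : K) + 1) := by
  simp [telescopeTerm]

theorem sum_centralBinom_mul_centralBinom_div (m : ℕ) :
    ∑ q ∈ range (m + 1), (centralBinom q * centralBinom (m - q) / ((q : K) + 1))
      = (2 * m + 1).choose (m + 1) := by
  rw [sum_range_succ, ← telescopeTerm_self,
    ← sum_congr rfl fun q hq => telescopeTerm_sub_succ (mem_range.mp hq),
    sum_range_sub', sub_add_cancel, telescopeTerm_zero]

end Telescoping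

theorem D_one_zero (m : ℕ) :
    ∑ q ∈ Finset.range (m + 1),
      ((2 * q).choose q : ℚ) * ((2 * m - 2 * q).choose (m - q) : ℚ) / ((q : ℚ) + 1)
    = ((2 * m + 1).choose (m + 1) : ℚ) := by
  rw [← sum_centralBinom_mul_centralBinom_div]
  refine sum_congr rfl fun q _ => ?_
  rw [← Nat.mul_sub]
  rfl
end

section
/- For every natural number m, the sum over q from 0 to m of C(2q,q)·C(2m-2q,m-q)·q/(q+1) (as rational numbers) equals 4^m - C(2m+1, m+1). -/
/-!
With `C q = centralBinom q`, the weight `q / (q + 1) = 1 - 1 / (q + 1)` and `C q / (q + 1) = catalan q`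
split the sum as `∑ C q * C (m - q) - ∑ catalan q * C (m - q)`.

The first convolution `S m` is `4 ^ m`: by the symmetry `q ↔ m - q`, `m * S m = 2 ∑ q C q C (m - q)`,
and `(q + 1) C (q + 1) = 2 (2q + 1) C q` turns this into `S (m + 1) = 4 S m`.
For the second, adding its mirror image replaces `catalan i * C j` by
`((i + 1) + (j + 1)) catalan i catalan j = (m + 2) catalan i catalan j`, so twice it equals
`(m + 2) catalan (m + 1) = C (m + 1) = 2 (2m + 1).choose (m + 1)`.
-/

open Finset Finset.Nat

theorem Finset.Nat.two_mul_sum_antidiagonal_fst_mul {R : Type*} [CommSemiring R] (n : ℕ)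
    (f : ℕ × ℕ → R) (hf : ∀ p, f p.swap = f p) :
    2 * ∑ p ∈ antidiagonal n, (p.1 : R) * f p = n * ∑ p ∈ antidiagonal n, f p := by
  have hswap : ∑ p ∈ antidiagonal n, (p.1 : R) * f p = ∑ p ∈ antidiagonal n, (p.2 : R) * f p := by
    rw [← sum_antidiagonal_swap]
    simp only [Prod.fst_swap, hf]
  rw [two_mul]
  nth_rw 2 [hswap]
  rw [← sum_add_distrib, mul_sum]
  refine sum_congr rfl fun p hp => ?_
  rw [← add_mul, ← Nat.cast_add, mem_antidiagonal.mp hp]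

namespace Nat

theorem succ_mul_sum_antidiagonal_centralBinom_mul_centralBinom_succ (n : ℕ) :
    (n + 1) * ∑ p ∈ antidiagonal (n + 1), centralBinom p.1 * centralBinom p.2
      = (n + 1) * (4 * ∑ p ∈ antidiagonal n, centralBinom p.1 * centralBinom p.2) := by
  have hsym : ∀ k, k * ∑ p ∈ antidiagonal k, centralBinom p.1 * centralBinom p.2
      = 2 * ∑ p ∈ antidiagonal k, p.1 * (centralBinom p.1 * centralBinom p.2) := fun k =>
    (two_mul_sum_antidiagonal_fst_mul k (fun p => centralBinom p.1 * centralBinom p.2)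
      fun p => Nat.mul_comm _ _).symm
  calc (n + 1) * ∑ p ∈ antidiagonal (n + 1), centralBinom p.1 * centralBinom p.2
      = 2 * ∑ p ∈ antidiagonal n, (p.1 + 1) * centralBinom (p.1 + 1) * centralBinom p.2 := by
        rw [hsym, sum_antidiagonal_succ]
        simp [mul_assoc]
    _ = 2 * ∑ p ∈ antidiagonal n, 2 * (2 * p.1 + 1) * centralBinom p.1 * centralBinom p.2 := by
        simp only [succ_mul_centralBinom_succ]
    _ = 4 * (2 * ∑ p ∈ antidiagonal n, p.1 * (centralBinom p.1 * centralBinom p.2)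
          + ∑ p ∈ antidiagonal n, centralBinom p.1 * centralBinom p.2) := by
        simp only [mul_sum, ← sum_add_distrib]
        exact sum_congr rfl fun p _ => by ring
    _ = (n + 1) * (4 * ∑ p ∈ antidiagonal n, centralBinom p.1 * centralBinom p.2) := by
        rw [← hsym]; ring

theorem sum_antidiagonal_centralBinom_mul_centralBinom (n : ℕ) :
    ∑ p ∈ antidiagonal n, centralBinom p.1 * centralBinom p.2 = 4 ^ n := by
  induction n with
  | zero => simp
  | succ n ih =>
    rw [pow_succ, ← ih, mul_comm _ 4]
    exact Nat.eq_of_mul_eq_mul_left n.succ_pos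
      (succ_mul_sum_antidiagonal_centralBinom_mul_centralBinom_succ n)

theorem centralBinom_succ_eq_two_mul_choose (n : ℕ) :
    (n + 1).centralBinom = 2 * (2 * n + 1).choose (n + 1) := by
  rw [centralBinom_eq_two_mul_choose, show 2 * (n + 1) = 2 * n + 1 + 1 by ring,
    choose_succ_succ', ← choose_symm_half, ← two_mul]

theorem sum_antidiagonal_catalan_mul_centralBinom (n : ℕ) :
    ∑ p ∈ antidiagonal n, catalan p.1 * centralBinom p.2 = (2 * n + 1).choose (n + 1) := by
  suffices 2 * ∑ p ∈ antidiagonal n, catalan p.1 * centralBinom p.2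
      = 2 * (2 * n + 1).choose (n + 1) by omega
  calc 2 * ∑ p ∈ antidiagonal n, catalan p.1 * centralBinom p.2
      = ∑ p ∈ antidiagonal n, (p.1 + p.2 + 2) * (catalan p.1 * catalan p.2) := by
        rw [two_mul]
        nth_rw 2 [← sum_antidiagonal_swap]
        rw [← sum_add_distrib]
        refine sum_congr rfl fun p _ => ?_
        simp only [Prod.fst_swap, Prod.snd_swap, ← succ_mul_catalan_eq_centralBinom]
        ring
    _ = (n + 2) * catalan (n + 1) := by
        rw [catalan_succ', mul_sum]
        exact sum_congr rfl fun p hp => by rw [mem_antidiagonal.mp hp]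
    _ = 2 * (2 * n + 1).choose (n + 1) := by
        rw [succ_mul_catalan_eq_centralBinom, centralBinom_succ_eq_two_mul_choose]

end Nat

theorem D_one_one (m : ℕ) :
    ∑ q ∈ Finset.range (m + 1),
      ((2 * q).choose q : ℚ) * ((2 * m - 2 * q).choose (m - q) : ℚ) * (q : ℚ) / ((q : ℚ) + 1)
    = 4 ^ m - ((2 * m + 1).choose (m + 1) : ℚ) := by
  have hsummand : ∀ q ∈ range (m + 1),
      ((2 * q).choose q : ℚ) * ((2 * m - 2 * q).choose (m - q) : ℚ) * (q : ℚ) / ((q : ℚ) + 1)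
        = q.centralBinom * (m - q).centralBinom - catalan q * (m - q).centralBinom := by
    intro q _
    rw [← Nat.mul_sub, ← Nat.centralBinom_eq_two_mul_choose, ← Nat.centralBinom_eq_two_mul_choose,
      ← succ_mul_catalan_eq_centralBinom]
    push_cast
    field_simp
    ring
  have hA : ∑ p ∈ antidiagonal m, (p.1.centralBinom * p.2.centralBinom : ℚ) = 4 ^ m := by
    exact_mod_cast Nat.sum_antidiagonal_centralBinom_mul_centralBinom m
  have hB : ∑ p ∈ antidiagonal m, (catalan p.1 * p.2.centralBinom : ℚ)
      = (2 * m + 1).choose (m + 1) := by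
    exact_mod_cast Nat.sum_antidiagonal_catalan_mul_centralBinom m
  rw [sum_congr rfl hsummand, sum_sub_distrib,
    ← sum_antidiagonal_eq_sum_range_succ (fun i j => (i.centralBinom * j.centralBinom : ℚ)),
    ← sum_antidiagonal_eq_sum_range_succ (fun i j => (catalan i * j.centralBinom : ℚ)), hA, hB]
end
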